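/- Let Q be an O-compatible set of weighted local cores relative to α, and ℓ an objective literal unassigned by α. If residual(ℓ,Q) + weight(Q) ≥ v*, then every total assignment β refining α that satisfies F with O(β) < v* must set ℓ to false. -/

import Mathlib

/-- Value of a literal (variable, polarity) under a total Boolean assignment. -/
def evalLit {V : Type*} (β : V → Bool) (l : V × Bool) : Bool :=
  if l.2 then β l.1 else !(β l.1)

/-- Negation of a literal. -/
def negLit {V : Type*} (l : V × Bool) : V × Bool := (l.1, !l.2)

/-- Objective value `O(β) = Σ_{ℓ ∈ obj, β ⊨ ℓ} w(ℓ)`. -/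
def objVal {V : Type*} (β : V → Bool) (obj : Finset (V × Bool)) (w : V × Bool → ℕ) : ℕ :=
  ∑ l ∈ obj, if evalLit β l then w l else 0

/-!
If `β` extends `α` and satisfies `F`, it falsifies some literal of `K` for every core
`(w, R, K) ∈ Q`, i.e. it makes some objective literal `b` with `¬b ∈ K` true.
Charging the weight of each core to such literals, `weight(Q)` is at most the sum over the
objective literals `b` true in `β` of the weight of the cores with `¬b ∈ K`. By compatibility
each such sum is at most `w b`, except that for `b = ℓ` we keep it exactly; so if `β` made `ℓ`
true we would get `weight(Q) + residual(ℓ, Q) ≤ O(β) < v*`.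
-/

theorem Finset.sum_le_sum_sum_filter_of_forall_exists {ι κ M : Type*} [AddCommMonoid M]
    [PartialOrder M] [CanonicallyOrderedAdd M] {s : Finset ι} {t : Finset κ} {P : ι → κ → Prop}
    [DecidableRel P] (c : ι → M) (h : ∀ i ∈ s, ∃ j ∈ t, P i j) :
    ∑ i ∈ s, c i ≤ ∑ j ∈ t, ∑ i ∈ s.filter (P · j), c i := calc
  ∑ i ∈ s, c i ≤ ∑ i ∈ s, ∑ _j ∈ t.filter (P i), c i := by
    refine Finset.sum_le_sum fun i hi => ?_
    obtain ⟨j, hj, hij⟩ := h i hi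
    exact Finset.single_le_sum (f := fun _ => c i) (fun _ _ => zero_le)
      (Finset.mem_filter.mpr ⟨hj, hij⟩)
  _ = ∑ j ∈ t, ∑ i ∈ s.filter (P · j), c i :=
    Finset.sum_comm' fun i j => by simp only [Finset.mem_filter]; tauto

section Cores

variable {V : Type*}

theorem evalLit_negLit (β : V → Bool) (l : V × Bool) :
    evalLit β (negLit l) = !evalLit β l := by
  obtain ⟨v, _ | _⟩ := l <;> simp [evalLit, negLit]

theorem objVal_eq_sum_filter (β : V → Bool) (obj : Finset (V × Bool)) (w : V × Bool → ℕ) :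
    objVal β obj w = ∑ b ∈ obj.filter (evalLit β · = true), w b :=
  Finset.sum_filter _ _ |>.symm

/-- A weighted local core `q = (w, R, K)` relative to `α`. -/
def IsWeightedLocalCore (F : (V → Bool) → Prop) (α : Set (V × Bool)) (obj : Finset (V × Bool))
    (q : ℕ × Finset (V × Bool) × Finset (V × Bool)) : Prop :=
  (∀ l ∈ q.2.1, l ∈ α) ∧ (∀ l ∈ q.2.2, ∃ b ∈ obj, l = negLit b) ∧
    ∀ γ : V → Bool, F γ → (∀ l ∈ q.2.1, evalLit γ l = true) →
      (∀ l ∈ q.2.2, evalLit γ l = true) → False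

theorem IsWeightedLocalCore.exists_negLit_mem {F : (V → Bool) → Prop} {α : Set (V × Bool)}
    {obj : Finset (V × Bool)} {q : ℕ × Finset (V × Bool) × Finset (V × Bool)}
    (hq : IsWeightedLocalCore F α obj q) {β : V → Bool} (hβα : ∀ l ∈ α, evalLit β l = true)
    (hβF : F β) : ∃ b ∈ obj.filter (evalLit β · = true), negLit b ∈ q.2.2 := by
  obtain ⟨hR, hK, hunsat⟩ := hq
  by_contra! hnone
  refine hunsat β hβF (fun l hl => hβα l (hR l hl)) fun l hl => ?_
  obtain ⟨b, hb, rfl⟩ := hK l hl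
  have hb_false : evalLit β b ≠ true := fun hb_true =>
    hnone b (Finset.mem_filter.mpr ⟨hb, hb_true⟩) hl
  simpa [evalLit_negLit] using hb_false

variable [DecidableEq V]

/-- The total weight of the cores of `Q` containing `¬l`: the weight of `l` in `O` minus
`residual(l, Q)`. -/
def coverage (Q : Finset (ℕ × Finset (V × Bool) × Finset (V × Bool))) (l : V × Bool) : ℕ :=
  ∑ q ∈ Q.filter (fun q => negLit l ∈ q.2.2), q.1

theorem sum_weight_le_sum_coverage {F : (V → Bool) → Prop} {α : Set (V × Bool)}
    {obj : Finset (V × Bool)} {Q : Finset (ℕ × Finset (V × Bool) × Finset (V × Bool))}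
    (hQ : ∀ q ∈ Q, IsWeightedLocalCore F α obj q) {β : V → Bool}
    (hβα : ∀ l ∈ α, evalLit β l = true) (hβF : F β) :
    ∑ q ∈ Q, q.1 ≤ ∑ b ∈ obj.filter (evalLit β · = true), coverage Q b :=
  Finset.sum_le_sum_sum_filter_of_forall_exists (s := Q) (P := fun q b => negLit b ∈ q.2.2)
    Prod.fst fun q hq => (hQ q hq).exists_negLit_mem hβα hβF

theorem sum_coverage_add_le {Q : Finset (ℕ × Finset (V × Bool) × Finset (V × Bool))}
    {w : V × Bool → ℕ} {S : Finset (V × Bool)} (hcompat : ∀ l ∈ S, coverage Q l ≤ w l)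
    {ℓ : V × Bool} (hℓ : ℓ ∈ S) :
    ∑ b ∈ S, coverage Q b + w ℓ ≤ coverage Q ℓ + ∑ b ∈ S, w b := by
  rw [← Finset.add_sum_erase S _ hℓ, ← Finset.add_sum_erase S w hℓ]
  have hrest : ∑ b ∈ S.erase ℓ, coverage Q b ≤ ∑ b ∈ S.erase ℓ, w b :=
    Finset.sum_le_sum fun b hb => hcompat b (Finset.mem_of_mem_erase hb)
  omega

end Cores

theorem stmt2_general {V : Type*} [DecidableEq V] (F : (V → Bool) → Prop)
    (α : Set (V × Bool)) (obj : Finset (V × Bool)) (w : V × Bool → ℕ)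
    (Q : Finset (ℕ × Finset (V × Bool) × Finset (V × Bool)))
    (hcore : ∀ q ∈ Q, (∀ l ∈ q.2.1, l ∈ α) ∧
      (∀ l ∈ q.2.2, ∃ b ∈ obj, l = negLit b) ∧
      (∀ γ : V → Bool, F γ → (∀ l ∈ q.2.1, evalLit γ l = true) →
        (∀ l ∈ q.2.2, evalLit γ l = true) → False))
    (hcompat : ∀ l ∈ obj,
      ∑ q ∈ Q.filter (fun q => negLit l ∈ q.2.2), q.1 ≤ w l)
    (ℓ : V × Bool) (hℓ : ℓ ∈ obj)
    (vstar : ℤ)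
    (hresid : ((w ℓ : ℕ) : ℤ) - ((∑ q ∈ Q.filter (fun q => negLit ℓ ∈ q.2.2), q.1 : ℕ) : ℤ)
        + ((∑ q ∈ Q, q.1 : ℕ) : ℤ) ≥ vstar) :
    ∀ β : V → Bool, (∀ l ∈ α, evalLit β l = true) → F β →
      ((objVal β obj w : ℕ) : ℤ) < vstar → evalLit β ℓ = false := by
  intro β hβα hβF hlt
  by_contra hℓ_true
  rw [Bool.not_eq_false] at hℓ_true
  have hweight := sum_weight_le_sum_coverage hcore hβα hβF
  have hcharge := sum_coverage_add_le (S := obj.filter (evalLit β · = true))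
    (fun l hl => hcompat l (Finset.mem_of_mem_filter l hl)) (Finset.mem_filter.mpr ⟨hℓ, hℓ_true⟩)
  rw [← objVal_eq_sum_filter β obj w] at hcharge
  change (w ℓ : ℤ) - (coverage Q ℓ : ℤ) + _ ≥ vstar at hresid
  omega

/-- Hardening: if `Q` is an `O`-compatible set of weighted local cores relative to `α`,
`ℓ` an objective literal unassigned by `α`, and `residual(ℓ,Q) + weight(Q) ≥ v*`, then
every total assignment `β` refining `α` satisfying `F` with `O(β) < v*` sets `ℓ` to false. -/
theorem stmt2 {V : Type*} [DecidableEq V] (F : (V → Bool) → Prop)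
    (α : Set (V × Bool)) (obj : Finset (V × Bool)) (w : V × Bool → ℕ)
    (hw : ∀ l ∈ obj, 0 < w l)
    (Q : Finset (ℕ × Finset (V × Bool) × Finset (V × Bool)))
    (hcore : ∀ q ∈ Q, (∀ l ∈ q.2.1, l ∈ α) ∧
      (∀ l ∈ q.2.2, ∃ b ∈ obj, l = negLit b) ∧
      (∀ γ : V → Bool, F γ → (∀ l ∈ q.2.1, evalLit γ l = true) →
        (∀ l ∈ q.2.2, evalLit γ l = true) → False))
    (hcompat : ∀ l ∈ obj,
      ∑ q ∈ Q.filter (fun q => negLit l ∈ q.2.2), q.1 ≤ w l)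
    (ℓ : V × Bool) (hℓ : ℓ ∈ obj)
    (hunassigned : ℓ ∉ α ∧ negLit ℓ ∉ α)
    (vstar : ℤ)
    (hresid : ((w ℓ : ℕ) : ℤ) - ((∑ q ∈ Q.filter (fun q => negLit ℓ ∈ q.2.2), q.1 : ℕ) : ℤ)
        + ((∑ q ∈ Q, q.1 : ℕ) : ℤ) ≥ vstar) :
    ∀ β : V → Bool, (∀ l ∈ α, evalLit β l = true) → F β →
      ((objVal β obj w : ℕ) : ℤ) < vstar → evalLit β ℓ = false :=
  stmt2_general F α obj w Q hcore hcompat ℓ hℓ vstar hresid
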